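/- arXiv:1410.1835 — 4 statements merged into one kernel-verified Lean document; each statement's English description precedes it below -/
import Mathlib

section
/- Let R be an associative unital ring and n a positive natural number. Then R and R^n are isomorphic as left R-modules if and only if there exist elements x_1, ..., x_n, y_1, ..., y_n of R such that y_i * x_j = if i = j then 1 else 0 for all i, j, and x_1*y_1 + ... + x_n*y_n = 1. -/
/-- For a unital ring `R` and `n ∈ ℕ`, `R ≅ Rⁿ` as left `R`-modules if and only if there
exist `x₁, …, xₙ, y₁, …, yₙ ∈ R` with `yᵢ xⱼ = δᵢⱼ 1` and `∑ᵢ xᵢ yᵢ = 1`. -/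
theorem iso_power_iff_relations (R : Type) [Ring R] (n : ℕ) (hn : 0 < n) :
    Nonempty (R ≃ₗ[R] (Fin n → R)) ↔
      ∃ x y : Fin n → R,
        (∀ i j : Fin n, y i * x j = if i = j then (1 : R) else 0) ∧
          (∑ i : Fin n, x i * y i) = 1 := by
  constructor
  · rintro ⟨e⟩
    refine ⟨fun i => e 1 i, fun i => e.symm (Pi.single i 1), ?_, ?_⟩
    · intro i j
      have h : e (e.symm (Pi.single i 1) * 1) = Pi.single i 1 := by
        rw [mul_one, e.apply_symm_apply]
      have h2 : e (e.symm (Pi.single i 1) * 1) = e.symm (Pi.single i 1) • e 1 := by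
        rw [← smul_eq_mul, e.map_smul]
      have := congrFun (h2.symm.trans h) j
      simp only [Pi.smul_apply, smul_eq_mul, Pi.single_apply] at this
      rw [this]
      simp [eq_comm]
    · have hv : (e 1 : Fin n → R) = ∑ i : Fin n, (e 1 i) • (Pi.single i 1 : Fin n → R) := by
        funext j
        simp [Pi.single_apply, Finset.sum_apply]
      calc (∑ i : Fin n, e 1 i * e.symm (Pi.single i 1))
          = e.symm (∑ i : Fin n, (e 1 i) • (Pi.single i 1 : Fin n → R)) := by
            rw [map_sum]
            simp [smul_eq_mul]
      _ = e.symm (e 1) := by rw [← hv]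
      _ = 1 := e.symm_apply_apply 1
  · rintro ⟨x, y, h1, h2⟩
    refine ⟨{ toFun := fun r i => r * x i
              map_add' := by intros; funext i; simp [add_mul]
              map_smul' := by intros; funext i; simp [mul_assoc]
              invFun := fun v => ∑ i, v i * y i
              left_inv := ?_
              right_inv := ?_ }⟩
    · intro r
      simp only [mul_assoc, ← Finset.mul_sum, h2, mul_one]
    · intro v
      funext i
      simp only [Finset.sum_mul, mul_assoc, h1]
      simp
end

section
/- Let K be a field and n ≥ 2 a natural number, and let L_K(1,n) be the Leavitt algebra of type (1,n). Then L_K(1,n) is a simple ring (it has no two-sided ideals other than {0} and itself), and moreover for each nonzero x ∈ L_K(1,n) there exist elements a, b ∈ L_K(1,n) with a*x*b = 1. -/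
/-- The defining relations of the Leavitt algebra `L_K(1,n)`: generators
`x₁, …, xₙ` (encoded as `Sum.inl i`) and `y₁, …, yₙ` (encoded as `Sum.inr i`), subject to
`yᵢ xⱼ = δᵢⱼ 1` and `∑ᵢ xᵢ yᵢ = 1`. -/
inductive LeavittRel (K : Type) [Field K] (n : ℕ) :
    FreeAlgebra K (Fin n ⊕ Fin n) → FreeAlgebra K (Fin n ⊕ Fin n) → Prop
  | yx_self (i : Fin n) :
      LeavittRel K n (FreeAlgebra.ι K (Sum.inr i) * FreeAlgebra.ι K (Sum.inl i)) 1
  | yx_ne {i j : Fin n} (h : i ≠ j) :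
      LeavittRel K n (FreeAlgebra.ι K (Sum.inr i) * FreeAlgebra.ι K (Sum.inl j)) 0
  | xy_sum :
      LeavittRel K n (∑ i : Fin n, FreeAlgebra.ι K (Sum.inl i) * FreeAlgebra.ι K (Sum.inr i)) 1

/-- The Leavitt algebra `L_K(1,n)` of type `(1,n)`. -/
abbrev LeavittAlgebra (K : Type) [Field K] (n : ℕ) : Type :=
  RingQuot (LeavittRel K n)

/-- A subset of a ring is a two-sided ideal. -/
def IsTwoSidedIdealSet {R : Type} [Zero R] [Add R] [Neg R] [Mul R] (I : Set R) : Prop :=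
  (0 : R) ∈ I ∧ (∀ a ∈ I, ∀ b ∈ I, a + b ∈ I) ∧ (∀ a ∈ I, -a ∈ I) ∧
    ∀ x : R, ∀ a ∈ I, x * a ∈ I ∧ a * x ∈ I

/-!
For a word `α = a₁ ⋯ a_k` write `x_α = x_{a₁} ⋯ x_{a_k}` and `y_α = y_{a_k} ⋯ y_{a₁}`. The
relations `y_i x_j = δ_{ij}` give `y_β x_γ = x_t`, `y_t` or `0` according as `γ = βt`, `β = γt`
or neither word is a prefix of the other, so the monomials `x_α y_β` span the algebra. Given
`z ≠ 0`, the identity `∑_{|σ| = N} x_σ y_σ = 1` yields a word `τ`, longer than every `β`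
occurring in `z`, with `z x_τ ≠ 0`; then `z x_τ = ∑ d_γ x_γ` involves `x`-monomials only. If `M`
bounds the lengths of the `γ` and `w = i₁ i₀^M` for two distinct letters `i₀ ≠ i₁` (this is
where `n ≥ 2` enters), the words `γw` are pairwise incomparable for the prefix order, so
`y_{γ₀w} (∑ d_γ x_γ) x_w = d_{γ₀}` for any `γ₀` with `d_{γ₀} ≠ 0`.
-/

open Submodule Set

namespace Leavitt

section Words

variable {R ι : Type*} [MonoidWithZero R] (x y : ι → R)

def xWord (w : List ι) : R := (w.map x).prod

def yWord (w : List ι) : R := (w.map y).reverse.prod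

def monomial (p : List ι × List ι) : R := xWord x p.1 * yWord y p.2

def monomials : Set R := insert 0 (range (monomial x y))

@[simp] theorem xWord_nil : xWord x [] = 1 := rfl

@[simp] theorem yWord_nil : yWord y [] = 1 := rfl

@[simp] theorem xWord_cons (a : ι) (w : List ι) : xWord x (a :: w) = x a * xWord x w := by
  simp [xWord]

@[simp] theorem yWord_cons (a : ι) (w : List ι) : yWord y (a :: w) = yWord y w * y a := by
  simp [yWord]

theorem xWord_append (u v : List ι) : xWord x (u ++ v) = xWord x u * xWord x v := by
  simp [xWord]

theorem yWord_append (u v : List ι) : yWord y (u ++ v) = yWord y v * yWord y u := by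
  simp [yWord]

variable {x y} [DecidableEq ι]

theorem yWord_mul_xWord_self (hyx : ∀ i j, y i * x j = if i = j then 1 else 0) (w : List ι) :
    yWord y w * xWord x w = 1 := by
  induction w with
  | nil => simp
  | cons a w ih =>
    rw [yWord_cons, xWord_cons, mul_assoc, ← mul_assoc (y a), hyx, if_pos rfl, one_mul, ih]

theorem yWord_mul_xWord_append (hyx : ∀ i j, y i * x j = if i = j then 1 else 0)
    (v u : List ι) : yWord y v * xWord x (v ++ u) = xWord x u := by
  rw [xWord_append, ← mul_assoc, yWord_mul_xWord_self hyx, one_mul]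

theorem yWord_append_mul_xWord (hyx : ∀ i j, y i * x j = if i = j then 1 else 0)
    (v u : List ι) : yWord y (v ++ u) * xWord x v = yWord y u := by
  rw [yWord_append, mul_assoc, yWord_mul_xWord_self hyx, mul_one]

theorem yWord_mul_xWord_of_not_prefix (hyx : ∀ i j, y i * x j = if i = j then 1 else 0) :
    ∀ {v u : List ι}, ¬ v <+: u → ¬ u <+: v → yWord y v * xWord x u = 0
  | [], u, hv, _ => absurd u.nil_prefix hv
  | _ :: _, [], _, hu => absurd List.nil_prefix hu
  | a :: v, b :: u, hv, hu => by
    rw [yWord_cons, xWord_cons, mul_assoc, ← mul_assoc (y a), hyx]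
    split_ifs with hab
    · subst hab
      rw [one_mul, yWord_mul_xWord_of_not_prefix hyx (mt (List.prefix_cons_inj _).mpr hv)
        (mt (List.prefix_cons_inj _).mpr hu)]
    · rw [zero_mul, mul_zero]

theorem yWord_mul_xWord_mem_monomials (hyx : ∀ i j, y i * x j = if i = j then 1 else 0)
    (v u : List ι) : yWord y v * xWord x u ∈ monomials x y := by
  by_cases hvu : v <+: u
  · obtain ⟨t, rfl⟩ := hvu
    exact Or.inr ⟨(t, []), by simp [monomial, yWord_mul_xWord_append hyx]⟩
  by_cases huv : u <+: v
  · obtain ⟨t, rfl⟩ := huv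
    exact Or.inr ⟨([], t), by simp [monomial, yWord_append_mul_xWord hyx]⟩
  exact Or.inl (yWord_mul_xWord_of_not_prefix hyx hvu huv)

theorem mul_mem_monomials (hyx : ∀ i j, y i * x j = if i = j then 1 else 0) {a b : R}
    (ha : a ∈ monomials x y) (hb : b ∈ monomials x y) : a * b ∈ monomials x y := by
  rcases ha with rfl | ⟨⟨α, β⟩, rfl⟩
  · exact Or.inl (zero_mul b)
  rcases hb with rfl | ⟨⟨γ, δ⟩, rfl⟩
  · exact Or.inl (mul_zero _)
  have hmul : monomial x y (α, β) * monomial x y (γ, δ) =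
      xWord x α * (yWord y β * xWord x γ) * yWord y δ := by
    simp only [monomial, mul_assoc]
  rw [hmul]
  rcases yWord_mul_xWord_mem_monomials hyx β γ with h | ⟨⟨t, s⟩, h⟩
  · rw [h, mul_zero, zero_mul]
    exact Or.inl rfl
  · rw [← h]
    exact Or.inr ⟨(α ++ t, δ ++ s), by simp only [monomial, xWord_append, yWord_append, mul_assoc]⟩

theorem closure_subset_monomials (hyx : ∀ i j, y i * x j = if i = j then 1 else 0) :
    (Submonoid.closure (range x ∪ range y) : Set R) ⊆ monomials x y := by
  intro z hz
  induction hz using Submonoid.closure_induction with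
  | mem z hz =>
    rcases hz with ⟨i, rfl⟩ | ⟨i, rfl⟩
    · exact Or.inr ⟨([i], []), by simp [monomial]⟩
    · exact Or.inr ⟨([], [i]), by simp [monomial]⟩
  | one => exact Or.inr ⟨([], []), by simp [monomial]⟩
  | mul a b _ _ ha hb => exact mul_mem_monomials hyx ha hb

end Words

theorem adjoin_le_span_monomial {K R ι : Type*} [CommSemiring K] [Semiring R] [Algebra K R]
    [DecidableEq ι] {x y : ι → R} (hyx : ∀ i j, y i * x j = if i = j then 1 else 0) :
    Subalgebra.toSubmodule (Algebra.adjoin K (range x ∪ range y)) ≤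
      span K (range (monomial x y)) := by
  rw [Algebra.adjoin_eq_span, ← span_insert_zero (s := range (monomial x y))]
  exact span_mono (closure_subset_monomials hyx)

theorem sum_xWord_mul_yWord {R ι : Type*} [Semiring R] [Fintype ι] {x y : ι → R}
    (hxy : ∑ i, x i * y i = 1) (N : ℕ) :
    ∑ σ : Fin N → ι, xWord x (List.ofFn σ) * yWord y (List.ofFn σ) = 1 := by
  induction N with
  | zero => simp
  | succ N ih =>
    rw [← (Fin.consEquiv fun _ => ι).sum_comp, Fintype.sum_prod_type]
    calc _ = ∑ i, x i * (∑ τ : Fin N → ι, xWord x (List.ofFn τ) * yWord y (List.ofFn τ)) * y i := by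
          simp [Fin.consEquiv, List.ofFn_succ, Finset.mul_sum, Finset.sum_mul, mul_assoc]
      _ = 1 := by simp only [ih, mul_one, hxy]

theorem monomial_mul_xWord_mem_span {K R ι : Type*} [Semiring K] [Semiring R] [Module K R]
    [DecidableEq ι] {x y : ι → R} (hyx : ∀ i j, y i * x j = if i = j then 1 else 0)
    {p : List ι × List ι} {τ : List ι} (hlen : p.2.length < τ.length) :
    monomial x y p * xWord x τ ∈ span K (range (xWord x)) := by
  rw [monomial, mul_assoc]
  by_cases hpre : p.2 <+: τ
  · obtain ⟨t, rfl⟩ := hpre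
    rw [yWord_mul_xWord_append hyx, ← xWord_append]
    exact subset_span ⟨_, rfl⟩
  · have hτ : ¬ τ <+: p.2 := fun h => (h.length_le.trans_lt hlen).false
    rw [yWord_mul_xWord_of_not_prefix hyx hpre hτ, mul_zero]
    exact zero_mem _

theorem eq_of_append_prefix_append_cons_replicate {ι : Type*} {i₀ i₁ : ι} (hi : i₀ ≠ i₁)
    {M : ℕ} {α β : List ι} (hβ : β.length ≤ M)
    (h : α ++ i₁ :: List.replicate M i₀ <+: β ++ i₁ :: List.replicate M i₀) : α = β := by
  obtain ⟨μ, rfl⟩ : α <+: β :=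
    List.prefix_of_prefix_length_le ((List.prefix_append _ _).trans h) (List.prefix_append _ _)
      (by simpa using h.length_le)
  rw [List.append_assoc, List.prefix_append_right_inj] at h
  obtain _ | ⟨c, μ⟩ := μ
  · simp
  · -- at position `|c :: μ|` the left word has the letter `i₀`, the right one `i₁`
    have := h.getElem (i := μ.length + 1) (by simp at hβ ⊢; omega)
    exact absurd (by simpa [List.getElem_append_right] using this) hi

theorem exists_mul_mul_eq_one_of_mem_span_xWord {K R ι : Type*} [Field K] [Ring R]
    [Algebra K R] [DecidableEq ι] {x y : ι → R} (hyx : ∀ i j, y i * x j = if i = j then 1 else 0)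
    {i₀ i₁ : ι} (hi : i₀ ≠ i₁) {z : R} (hz : z ∈ span K (range (xWord x))) (hz0 : z ≠ 0) :
    ∃ a b : R, a * z * b = 1 := by
  obtain ⟨d, rfl⟩ := Finsupp.mem_span_range_iff_exists_finsupp.mp hz
  obtain ⟨γ₀, hγ₀⟩ : d.support.Nonempty := by
    rw [Finsupp.support_nonempty_iff]
    rintro rfl
    exact hz0 Finsupp.sum_zero_index
  set w := i₁ :: List.replicate (d.support.sup List.length) i₀
  have hsep : ∀ γ ∈ d.support,
      yWord y (γ₀ ++ w) * xWord x (γ ++ w) = if γ = γ₀ then 1 else 0 := by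
    intro γ hγ
    split_ifs with h
    · rw [h, yWord_mul_xWord_self hyx]
    · exact yWord_mul_xWord_of_not_prefix hyx
        (fun hp => h (eq_of_append_prefix_append_cons_replicate hi (Finset.le_sup hγ) hp).symm)
        (fun hp => h (eq_of_append_prefix_append_cons_replicate hi (Finset.le_sup hγ₀) hp))
  have hsum :
      yWord y (γ₀ ++ w) * (d.sum fun γ k => k • xWord x γ) * xWord x w = d γ₀ • 1 :=
    calc yWord y (γ₀ ++ w) * (d.sum fun γ k => k • xWord x γ) * xWord x w
        = d.sum fun γ k => k • (yWord y (γ₀ ++ w) * xWord x (γ ++ w)) := by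
          simp only [Finsupp.mul_sum, Finsupp.sum_mul, mul_smul_comm, smul_mul_assoc,
            xWord_append, mul_assoc]
      _ = d.sum fun γ k => k • if γ = γ₀ then (1 : R) else 0 :=
          Finsupp.sum_congr fun γ hγ => by rw [hsep γ hγ]
      _ = d γ₀ • 1 := by simp [smul_ite, Finsupp.sum_ite_eq', hγ₀]
  refine ⟨(d γ₀)⁻¹ • yWord y (γ₀ ++ w), xWord x w, ?_⟩
  rw [smul_mul_assoc, smul_mul_assoc, hsum, smul_smul,
    inv_mul_cancel₀ (Finsupp.mem_support_iff.mp hγ₀), one_smul]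

theorem exists_mul_mul_eq_one_of_mem_span_monomial {K R ι : Type*} [Field K] [Ring R]
    [Algebra K R] [Fintype ι] [DecidableEq ι] {x y : ι → R}
    (hyx : ∀ i j, y i * x j = if i = j then 1 else 0) (hxy : ∑ i, x i * y i = 1)
    {i₀ i₁ : ι} (hi : i₀ ≠ i₁) {z : R} (hz : z ∈ span K (range (monomial x y)))
    (hz0 : z ≠ 0) :
    ∃ a b : R, a * z * b = 1 := by
  obtain ⟨c, hc⟩ := Finsupp.mem_span_range_iff_exists_finsupp.mp hz
  set N := (c.support.sup fun p => p.2.length) + 1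
  obtain ⟨σ, hσ⟩ : ∃ σ : Fin N → ι, z * xWord x (List.ofFn σ) ≠ 0 := by
    by_contra! h
    apply hz0
    rw [← mul_one z, ← sum_xWord_mul_yWord hxy N, Finset.mul_sum]
    exact Finset.sum_eq_zero fun σ _ => by rw [← mul_assoc, h σ, zero_mul]
  have hmem : z * xWord x (List.ofFn σ) ∈ span K (range (xWord x)) := by
    rw [← hc, Finsupp.sum_mul]
    refine Submodule.finsuppSum_mem _ _ _ _ fun p hp => ?_
    rw [smul_mul_assoc]
    refine smul_mem _ _ (monomial_mul_xWord_mem_span hyx ?_)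
    rw [List.length_ofFn]
    exact Nat.lt_succ_of_le (Finset.le_sup (f := fun p => p.2.length)
      (Finsupp.mem_support_iff.mpr hp))
  obtain ⟨a, b, hab⟩ := exists_mul_mul_eq_one_of_mem_span_xWord hyx hi hmem hσ
  exact ⟨a, xWord x (List.ofFn σ) * b, by rw [← hab]; simp only [mul_assoc]⟩

end Leavitt

namespace LeavittAlgebra

variable (K : Type) [Field K] (n : ℕ)

noncomputable def x (i : Fin n) : LeavittAlgebra K n :=
  RingQuot.mkAlgHom K (LeavittRel K n) (FreeAlgebra.ι K (Sum.inl i))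

noncomputable def y (i : Fin n) : LeavittAlgebra K n :=
  RingQuot.mkAlgHom K (LeavittRel K n) (FreeAlgebra.ι K (Sum.inr i))

theorem y_mul_x (i j : Fin n) : y K n i * x K n j = if i = j then 1 else 0 := by
  split_ifs with h
  · subst h
    simpa [x, y] using RingQuot.mkAlgHom_rel K (LeavittRel.yx_self (K := K) i)
  · simpa [x, y] using RingQuot.mkAlgHom_rel K (LeavittRel.yx_ne (K := K) h)

theorem sum_x_mul_y : ∑ i, x K n i * y K n i = 1 := by
  simpa [x, y] using RingQuot.mkAlgHom_rel K (LeavittRel.xy_sum (K := K) (n := n))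

theorem adjoin_range_x_union_range_y :
    Algebra.adjoin K (range (x K n) ∪ range (y K n)) = ⊤ := by
  have hgen : range (x K n) ∪ range (y K n) =
      RingQuot.mkAlgHom K (LeavittRel K n) '' range (FreeAlgebra.ι K) := by
    rw [← Set.Sum.elim_range, ← Set.range_comp]
    congr
    funext s
    cases s <;> rfl
  rw [hgen, Algebra.adjoin_image, FreeAlgebra.adjoin_range_ι, Algebra.map_top,
    AlgHom.range_eq_top]
  exact RingQuot.mkAlgHom_surjective K _

theorem span_monomial : span K (range (Leavitt.monomial (x K n) (y K n))) = ⊤ := by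
  simpa [adjoin_range_x_union_range_y] using
    Leavitt.adjoin_le_span_monomial (K := K) (y_mul_x K n)

theorem exists_mul_mul_eq_one (hn : 2 ≤ n) {z : LeavittAlgebra K n} (hz : z ≠ 0) :
    ∃ a b : LeavittAlgebra K n, a * z * b = 1 :=
  Leavitt.exists_mul_mul_eq_one_of_mem_span_monomial (y_mul_x K n) (sum_x_mul_y K n)
    (i₀ := ⟨0, by omega⟩) (i₁ := ⟨1, by omega⟩) (by simp) (span_monomial K n ▸ mem_top) hz

end LeavittAlgebra

theorem IsTwoSidedIdealSet.eq_singleton_zero_or_eq_univ {R : Type} [Ring R] {I : Set R}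
    (hI : IsTwoSidedIdealSet I) (h : ∀ z : R, z ≠ 0 → ∃ a b : R, a * z * b = 1) :
    I = {0} ∨ I = univ := by
  obtain ⟨h0, -, -, hmul⟩ := hI
  by_cases hI0 : ∀ z ∈ I, z = 0
  · exact Or.inl (eq_singleton_iff_unique_mem.mpr ⟨h0, hI0⟩)
  push Not at hI0
  obtain ⟨z, hz, hz0⟩ := hI0
  obtain ⟨a, b, hab⟩ := h z hz0
  have h1 : (1 : R) ∈ I := hab ▸ (hmul b _ (hmul a z hz).1).2
  exact Or.inr (eq_univ_of_forall fun r => mul_one r ▸ (hmul r 1 h1).1)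

/-- **Leavitt's simplicity theorem.**  For any field `K` and `n ≥ 2`, the Leavitt algebra
`L_K(1,n)` is a simple ring (its only two-sided ideals are `{0}` and itself), and for
every nonzero `x ∈ L_K(1,n)` there exist `a, b` with `a x b = 1`. -/
theorem leavitt_algebra_simple (K : Type) [Field K] (n : ℕ) (hn : 2 ≤ n) :
    (∀ I : Set (LeavittAlgebra K n), IsTwoSidedIdealSet I → I = {0} ∨ I = Set.univ) ∧
      (∀ x : LeavittAlgebra K n, x ≠ 0 →
        ∃ a b : LeavittAlgebra K n, a * x * b = 1) := by
  have hunit :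
      ∀ x : LeavittAlgebra K n, x ≠ 0 → ∃ a b : LeavittAlgebra K n, a * x * b = 1 :=
    fun _ hx => LeavittAlgebra.exists_mul_mul_eq_one K n hn hx
  exact ⟨fun _ hI => hI.eq_singleton_zero_or_eq_univ hunit, hunit⟩
end

section
/- Let K be any field, let T be the Toeplitz graph with two vertices v, w and two edges e, f where s(e) = r(e) = v, s(f) = v, r(f) = w, and let A = K⟨x, y | xy = 1⟩ be the Jacobson algebra. Then L_K(T) ≅ A as K-algebras, via an isomorphism sending v ↦ yx, w ↦ 1 - yx, e ↦ y²x, f ↦ y - y²x, e* ↦ yx², f* ↦ x - yx². -/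
/-!
In any algebra with `x y = 1` the element `p = y x` is idempotent with `p y = y` and `x p = x`,
and `p, 1 - p, y p, y (1 - p), p x, (1 - p) x` satisfy the Leavitt relations of the Toeplitz
graph. Conversely, in `L_K(T)` the pair `e* + f*, e + f` is a one-sided inverse pair, since
`(e* + f*)(e + f) = v + w = 1`. The two induced algebra maps are mutually inverse: this is
checked on generators, the key identity being `(e + f)(e* + f*) = e e* + f f* = v`, the
Cuntz–Krieger relation at `v`.
-/

/-- Generators of the Leavitt path algebra: vertices, edges, and ghost edges. -/
inductive LPAGen (V E : Type) : Type
  | vertex : V → LPAGen V E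
  | edge : E → LPAGen V E
  | ghost : E → LPAGen V E

/-- The defining relations of the Leavitt path algebra of a finite graph
(including the relation `∑ v = 1`, which presents the honest unital Leavitt path
algebra of a graph with finitely many vertices). -/
inductive LPARel (K : Type) [Field K] {V E : Type} [Fintype V] (s r : E → V) :
    FreeAlgebra K (LPAGen V E) → FreeAlgebra K (LPAGen V E) → Prop
  | vertex_self (v : V) :
      LPARel K s r (FreeAlgebra.ι K (LPAGen.vertex v) * FreeAlgebra.ι K (LPAGen.vertex v))
        (FreeAlgebra.ι K (LPAGen.vertex v))
  | vertex_ne {v w : V} (h : v ≠ w) :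
      LPARel K s r (FreeAlgebra.ι K (LPAGen.vertex v) * FreeAlgebra.ι K (LPAGen.vertex w)) 0
  | edge_left (e : E) :
      LPARel K s r (FreeAlgebra.ι K (LPAGen.vertex (s e)) * FreeAlgebra.ι K (LPAGen.edge e))
        (FreeAlgebra.ι K (LPAGen.edge e))
  | edge_right (e : E) :
      LPARel K s r (FreeAlgebra.ι K (LPAGen.edge e) * FreeAlgebra.ι K (LPAGen.vertex (r e)))
        (FreeAlgebra.ι K (LPAGen.edge e))
  | ghost_left (e : E) :
      LPARel K s r (FreeAlgebra.ι K (LPAGen.vertex (r e)) * FreeAlgebra.ι K (LPAGen.ghost e))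
        (FreeAlgebra.ι K (LPAGen.ghost e))
  | ghost_right (e : E) :
      LPARel K s r (FreeAlgebra.ι K (LPAGen.ghost e) * FreeAlgebra.ι K (LPAGen.vertex (s e)))
        (FreeAlgebra.ι K (LPAGen.ghost e))
  | ck1_self (e : E) :
      LPARel K s r (FreeAlgebra.ι K (LPAGen.ghost e) * FreeAlgebra.ι K (LPAGen.edge e))
        (FreeAlgebra.ι K (LPAGen.vertex (r e)))
  | ck1_ne {e f : E} (h : e ≠ f) :
      LPARel K s r (FreeAlgebra.ι K (LPAGen.ghost e) * FreeAlgebra.ι K (LPAGen.edge f)) 0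
  | ck2 (v : V) (h : {e : E | s e = v}.Finite) (hne : {e : E | s e = v}.Nonempty) :
      LPARel K s r (FreeAlgebra.ι K (LPAGen.vertex v))
        (h.toFinset.sum fun e => FreeAlgebra.ι K (LPAGen.edge e) * FreeAlgebra.ι K (LPAGen.ghost e))
  | unit :
      LPARel K s r (∑ v : V, FreeAlgebra.ι K (LPAGen.vertex v)) 1

/-- The Leavitt path algebra of a finite graph with coefficients in `K`. -/
abbrev LPA (K : Type) [Field K] {V E : Type} [Fintype V] (s r : E → V) : Type :=
  RingQuot (LPARel K s r)

variable (K : Type) [Field K] {V E : Type} [Fintype V] (s r : E → V)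

/-- The canonical image of a generator in the Leavitt path algebra. -/
def gen (g : LPAGen V E) : LPA K s r :=
  RingQuot.mkAlgHom K (LPARel K s r) (FreeAlgebra.ι K g)


def vertexEl (v : V) : LPA K s r := gen K s r (LPAGen.vertex v)
def edgeEl (e : E) : LPA K s r := gen K s r (LPAGen.edge e)
def ghostEl (e : E) : LPA K s r := gen K s r (LPAGen.ghost e)

/-- Vertices of the Toeplitz graph. -/
inductive TV : Type
  | v : TV
  | w : TV
  deriving DecidableEq

instance : Fintype TV :=
  ⟨{TV.v, TV.w}, fun x => by cases x <;> simp⟩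

/-- Edges of the Toeplitz graph: a loop `e` at `v` and an edge `f` from `v` to `w`. -/
inductive TE : Type
  | e : TE
  | f : TE
  deriving DecidableEq

instance : Fintype TE :=
  ⟨{TE.e, TE.f}, fun x => by cases x <;> simp⟩

/-- Source map of the Toeplitz graph. -/
def ts : TE → TV
  | TE.e => TV.v
  | TE.f => TV.v

/-- Range map of the Toeplitz graph. -/
def tr : TE → TV
  | TE.e => TV.v
  | TE.f => TV.w

/-- Generators of the Jacobson algebra `K⟨x, y | xy = 1⟩`. -/
inductive JGen : Type
  | x : JGen
  | y : JGen

/-- The defining relation `x y = 1` of the Jacobson algebra. -/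
inductive JRel (K : Type) [Field K] : FreeAlgebra K JGen → FreeAlgebra K JGen → Prop
  | xy : JRel K (FreeAlgebra.ι K JGen.x * FreeAlgebra.ι K JGen.y) 1

/-- The Jacobson algebra `A = K⟨x, y | xy = 1⟩`. -/
abbrev JacobsonAlgebra (K : Type) [Field K] : Type := RingQuot (JRel K)

/-- The generator `x` of the Jacobson algebra. -/
def jX (K : Type) [Field K] : JacobsonAlgebra K :=
  RingQuot.mkAlgHom K (JRel K) (FreeAlgebra.ι K JGen.x)

/-- The generator `y` of the Jacobson algebra. -/
def jY (K : Type) [Field K] : JacobsonAlgebra K :=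
  RingQuot.mkAlgHom K (JRel K) (FreeAlgebra.ι K JGen.y)

namespace LPA

variable {K s r} {A : Type} [Ring A] [Algebra K A]

section lift

variable (g : LPAGen V E → A)
    (hg : ∀ ⦃a b⦄, LPARel K s r a b → FreeAlgebra.lift K g a = FreeAlgebra.lift K g b)

noncomputable def lift : LPA K s r →ₐ[K] A :=
  RingQuot.liftAlgHom K ⟨FreeAlgebra.lift K g, hg⟩

@[simp]
theorem lift_vertexEl (v : V) :
    lift g hg (vertexEl K s r v) = g (.vertex v) := by
  simp [lift, vertexEl, gen]

@[simp]
theorem lift_edgeEl (e : E) :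
    lift g hg (edgeEl K s r e) = g (.edge e) := by
  simp [lift, edgeEl, gen]

@[simp]
theorem lift_ghostEl (e : E) :
    lift g hg (ghostEl K s r e) = g (.ghost e) := by
  simp [lift, ghostEl, gen]

end lift

theorem algHom_ext {φ ψ : LPA K s r →ₐ[K] A}
    (hv : ∀ v, φ (vertexEl K s r v) = ψ (vertexEl K s r v))
    (he : ∀ e, φ (edgeEl K s r e) = ψ (edgeEl K s r e))
    (hg : ∀ e, φ (ghostEl K s r e) = ψ (ghostEl K s r e)) : φ = ψ := by
  refine RingQuot.ringQuot_ext' K _ _ (FreeAlgebra.hom_ext (funext fun x => ?_))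
  cases x with
  | vertex v => exact hv v
  | edge e => exact he e
  | ghost e => exact hg e

theorem vertexEl_mul_vertexEl_of_ne {v w : V} (h : v ≠ w) :
    vertexEl K s r v * vertexEl K s r w = 0 := by
  simpa [vertexEl, gen] using
    RingQuot.mkAlgHom_rel K (LPARel.vertex_ne (K := K) (s := s) (r := r) h)

theorem edgeEl_mul_vertexEl_range (e : E) :
    edgeEl K s r e * vertexEl K s r (r e) = edgeEl K s r e := by
  simpa [edgeEl, vertexEl, gen] using
    RingQuot.mkAlgHom_rel K (LPARel.edge_right (K := K) (s := s) (r := r) e)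

theorem vertexEl_range_mul_ghostEl (e : E) :
    vertexEl K s r (r e) * ghostEl K s r e = ghostEl K s r e := by
  simpa [ghostEl, vertexEl, gen] using
    RingQuot.mkAlgHom_rel K (LPARel.ghost_left (K := K) (s := s) (r := r) e)

theorem ghostEl_mul_edgeEl (e : E) :
    ghostEl K s r e * edgeEl K s r e = vertexEl K s r (r e) := by
  simpa [ghostEl, edgeEl, vertexEl, gen] using
    RingQuot.mkAlgHom_rel K (LPARel.ck1_self (K := K) (s := s) (r := r) e)

theorem ghostEl_mul_edgeEl_of_ne {e f : E} (h : e ≠ f) :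
    ghostEl K s r e * edgeEl K s r f = 0 := by
  simpa [ghostEl, edgeEl, gen] using
    RingQuot.mkAlgHom_rel K (LPARel.ck1_ne (K := K) (s := s) (r := r) h)

theorem edgeEl_mul_vertexEl_of_ne {e : E} {v : V} (h : r e ≠ v) :
    edgeEl K s r e * vertexEl K s r v = 0 := by
  rw [← edgeEl_mul_vertexEl_range, mul_assoc, vertexEl_mul_vertexEl_of_ne h, mul_zero]

theorem vertexEl_mul_ghostEl_of_ne {e : E} {v : V} (h : v ≠ r e) :
    vertexEl K s r v * ghostEl K s r e = 0 := by
  rw [← vertexEl_range_mul_ghostEl, ← mul_assoc, vertexEl_mul_vertexEl_of_ne h, zero_mul]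

theorem edgeEl_mul_ghostEl_of_range_ne {e f : E} (h : r e ≠ r f) :
    edgeEl K s r e * ghostEl K s r f = 0 := by
  rw [← vertexEl_range_mul_ghostEl, ← mul_assoc, edgeEl_mul_vertexEl_of_ne h, zero_mul]

theorem vertexEl_eq_sum [Fintype E] [DecidableEq V] {v : V} (hv : ∃ e, s e = v) :
    vertexEl K s r v = ∑ e with s e = v, edgeEl K s r e * ghostEl K s r e := by
  simpa [vertexEl, edgeEl, ghostEl, gen] using
    RingQuot.mkAlgHom_rel K (LPARel.ck2 (K := K) (s := s) (r := r) v (Set.toFinite _) hv)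

theorem sum_vertexEl : ∑ v, vertexEl K s r v = 1 := by
  simpa [vertexEl, gen] using RingQuot.mkAlgHom_rel K (LPARel.unit (K := K) (s := s) (r := r))

end LPA

namespace JacobsonAlgebra

variable {K} {A : Type} [Ring A] [Algebra K A]

theorem jX_mul_jY : jX K * jY K = 1 := by
  simpa [jX, jY] using RingQuot.mkAlgHom_rel K (JRel.xy (K := K))

noncomputable def lift (x y : A) (hxy : x * y = 1) : JacobsonAlgebra K →ₐ[K] A :=
  RingQuot.liftAlgHom K ⟨FreeAlgebra.lift K (JGen.rec x y), fun _ _ h => by cases h; simpa⟩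

@[simp]
theorem lift_jX (x y : A) (hxy : x * y = 1) : lift x y hxy (jX K) = x := by
  simp [lift, jX]

@[simp]
theorem lift_jY (x y : A) (hxy : x * y = 1) : lift x y hxy (jY K) = y := by
  simp [lift, jY]

theorem algHom_ext {φ ψ : JacobsonAlgebra K →ₐ[K] A} (hx : φ (jX K) = ψ (jX K))
    (hy : φ (jY K) = ψ (jY K)) : φ = ψ := by
  refine RingQuot.ringQuot_ext' K _ _ (FreeAlgebra.hom_ext (funext fun g => ?_))
  cases g
  · exact hx
  · exact hy

end JacobsonAlgebra

namespace Toeplitz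

variable {K} {A : Type} [Ring A] [Algebra K A]

theorem univ_TV : (Finset.univ : Finset TV) = {TV.v, TV.w} := rfl

theorem univ_TE : (Finset.univ : Finset TE) = {TE.e, TE.f} := rfl

@[simp]
theorem ts_eq_v (i : TE) : ts i = TV.v := by cases i <;> rfl

def gens (x y : A) : LPAGen TV TE → A
  | .vertex .v => y * x
  | .vertex .w => 1 - y * x
  | .edge .e => y * y * x
  | .edge .f => y - y * y * x
  | .ghost .e => y * x * x
  | .ghost .f => x - y * x * x

theorem gens_respects_rel {x y : A} (hxy : x * y = 1) ⦃a b : FreeAlgebra K (LPAGen TV TE)⦄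
    (h : LPARel K ts tr a b) :
    FreeAlgebra.lift K (gens x y) a = FreeAlgebra.lift K (gens x y) b := by
  have hxy' (t : A) : x * (y * t) = t := by rw [← mul_assoc, hxy, one_mul]
  induction h with
  | vertex_self u => cases u <;> simp [gens, mul_sub, sub_mul, mul_assoc, hxy']
  | @vertex_ne u u' h => cases u <;> cases u' <;> simp_all [gens, mul_sub, sub_mul, mul_assoc]
  | edge_left i => cases i <;> simp [gens, mul_sub, mul_assoc, hxy, hxy']
  | edge_right i => cases i <;> simp [gens, tr, mul_sub, sub_mul, mul_assoc, hxy']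
  | ghost_left i => cases i <;> simp [gens, tr, mul_sub, sub_mul, mul_assoc, hxy']
  | ghost_right i => cases i <;> simp [gens, sub_mul, mul_assoc, hxy']
  | ck1_self i => cases i <;> simp [gens, tr, mul_sub, sub_mul, mul_assoc, hxy, hxy']
  | @ck1_ne i j h => cases i <;> cases j <;> simp_all [gens, mul_sub, sub_mul, mul_assoc]
  | ck2 u _ hne => cases u <;> simp_all [gens, univ_TE, mul_sub, sub_mul, mul_assoc]
  | unit => simp [gens, univ_TV]

noncomputable def lift {x y : A} (hxy : x * y = 1) : LPA K ts tr →ₐ[K] A :=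
  LPA.lift (gens x y) (gens_respects_rel hxy)

theorem vertexEl_v_add_vertexEl_w : vertexEl K ts tr .v + vertexEl K ts tr .w = 1 := by
  rw [← LPA.sum_vertexEl, univ_TV, Finset.sum_pair (by decide)]

theorem edgeEl_add_mul_vertexEl :
    (edgeEl K ts tr .e + edgeEl K ts tr .f) * vertexEl K ts tr .v = edgeEl K ts tr .e := by
  rw [add_mul, LPA.edgeEl_mul_vertexEl_of_ne (e := TE.f) (by decide), add_zero]
  exact LPA.edgeEl_mul_vertexEl_range TE.e

theorem vertexEl_mul_ghostEl_add :
    vertexEl K ts tr .v * (ghostEl K ts tr .e + ghostEl K ts tr .f) = ghostEl K ts tr .e := by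
  rw [mul_add, LPA.vertexEl_mul_ghostEl_of_ne (e := TE.f) (by decide), add_zero]
  exact LPA.vertexEl_range_mul_ghostEl TE.e

theorem ghostEl_add_mul_edgeEl_add :
    (ghostEl K ts tr .e + ghostEl K ts tr .f) * (edgeEl K ts tr .e + edgeEl K ts tr .f) = 1 := by
  rw [add_mul, mul_add, mul_add, LPA.ghostEl_mul_edgeEl, LPA.ghostEl_mul_edgeEl,
    LPA.ghostEl_mul_edgeEl_of_ne (by decide), LPA.ghostEl_mul_edgeEl_of_ne (by decide),
    add_zero, zero_add, ← vertexEl_v_add_vertexEl_w]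
  rfl

theorem edgeEl_add_mul_ghostEl_add :
    (edgeEl K ts tr .e + edgeEl K ts tr .f) * (ghostEl K ts tr .e + ghostEl K ts tr .f) =
      vertexEl K ts tr .v := by
  rw [add_mul, mul_add, mul_add,
    LPA.edgeEl_mul_ghostEl_of_range_ne (e := TE.e) (f := TE.f) (by decide),
    LPA.edgeEl_mul_ghostEl_of_range_ne (e := TE.f) (f := TE.e) (by decide), add_zero, zero_add,
    LPA.vertexEl_eq_sum (v := TV.v) ⟨TE.e, rfl⟩]
  simp [univ_TE]

noncomputable def ofJacobson : JacobsonAlgebra K →ₐ[K] LPA K ts tr :=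
  JacobsonAlgebra.lift _ _ (ghostEl_add_mul_edgeEl_add (K := K))

theorem ofJacobson_jY_mul_jX : ofJacobson (jY K * jX K) = vertexEl K ts tr .v := by
  simp [ofJacobson, edgeEl_add_mul_ghostEl_add]

theorem lift_comp_ofJacobson :
    (lift JacobsonAlgebra.jX_mul_jY).comp ofJacobson = AlgHom.id K (JacobsonAlgebra K) := by
  apply JacobsonAlgebra.algHom_ext <;> simp [lift, ofJacobson, gens]

theorem ofJacobson_comp_lift :
    ofJacobson.comp (lift JacobsonAlgebra.jX_mul_jY) = AlgHom.id K (LPA K ts tr) := by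
  have hY : ofJacobson (jY K) = edgeEl K ts tr .e + edgeEl K ts tr .f := by simp [ofJacobson]
  have hX : ofJacobson (jX K) = ghostEl K ts tr .e + ghostEl K ts tr .f := by simp [ofJacobson]
  apply LPA.algHom_ext <;> rintro (_ | _) <;>
    simp only [AlgHom.comp_apply, AlgHom.id_apply, lift, LPA.lift_vertexEl, LPA.lift_edgeEl,
      LPA.lift_ghostEl, gens]
  · exact ofJacobson_jY_mul_jX
  · rw [map_sub, map_one, ofJacobson_jY_mul_jX, ← vertexEl_v_add_vertexEl_w, add_sub_cancel_left]
  · rw [mul_assoc, map_mul, ofJacobson_jY_mul_jX, hY, edgeEl_add_mul_vertexEl]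
  · rw [map_sub, mul_assoc, map_mul, ofJacobson_jY_mul_jX, hY, edgeEl_add_mul_vertexEl,
      add_sub_cancel_left]
  · rw [map_mul, ofJacobson_jY_mul_jX, hX, vertexEl_mul_ghostEl_add]
  · rw [map_sub, map_mul, ofJacobson_jY_mul_jX, hX, vertexEl_mul_ghostEl_add, add_sub_cancel_left]

end Toeplitz

/-- The Leavitt path algebra of the Toeplitz graph `T` is isomorphic to the Jacobson
algebra `A = K⟨x, y | xy = 1⟩`, via `v ↦ yx`, `w ↦ 1 - yx`, `e ↦ y²x`, `f ↦ y - y²x`,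
`e* ↦ yx²`, `f* ↦ x - yx²`. -/
theorem lpa_toeplitz_iso_jacobson (K : Type) [Field K] :
    ∃ φ : LPA K ts tr ≃ₐ[K] JacobsonAlgebra K,
      φ (vertexEl K ts tr TV.v) = jY K * jX K ∧
      φ (vertexEl K ts tr TV.w) = 1 - jY K * jX K ∧
      φ (edgeEl K ts tr TE.e) = jY K * jY K * jX K ∧
      φ (edgeEl K ts tr TE.f) = jY K - jY K * jY K * jX K ∧
      φ (ghostEl K ts tr TE.e) = jY K * jX K * jX K ∧
      φ (ghostEl K ts tr TE.f) = jX K - jY K * jX K * jX K :=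
  ⟨AlgEquiv.ofAlgHom _ _ Toeplitz.lift_comp_ofJacobson Toeplitz.ofJacobson_comp_lift,
    LPA.lift_vertexEl .., LPA.lift_vertexEl .., LPA.lift_edgeEl .., LPA.lift_edgeEl ..,
    LPA.lift_ghostEl .., LPA.lift_ghostEl ..⟩
end

section
/- Let E be a row-finite directed graph. Then the graph monoid M_E is a refinement monoid, and M_E is separative. That is: (refinement) whenever a_1 + a_2 = b_1 + b_2 in M_E, there exist elements m_{11}, m_{12}, m_{21}, m_{22} ∈ M_E with a_1 = m_{11} + m_{12}, a_2 = m_{21} + m_{22}, b_1 = m_{11} + m_{21}, and b_2 = m_{12} + m_{22}; and (separativity) whenever a, b, c ∈ M_E satisfy a + c = b + c and there exist n ∈ ℕ and elements u, w ∈ M_E with c + u = n·a and c + w = n·b, then a = b. -/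
/-- The defining relations of the graph monoid `M_E` of a graph with vertices `V`, edges
`E` and source and range maps `s, r`: for each non-sink `v` emitting finitely many edges,
`a_v = ∑_{s(e) = v} a_{r(e)}`, as a relation on the free commutative monoid `V →₀ ℕ`. -/
inductive GMRel {V E : Type} (s r : E → V) : (V →₀ ℕ) → (V →₀ ℕ) → Prop
  | ck (v : V) (h : {e : E | s e = v}.Finite) (hne : {e : E | s e = v}.Nonempty) :
      GMRel s r (Finsupp.single v 1) (h.toFinset.sum fun e => Finsupp.single (r e) 1)

/-- The graph monoid `M_E`: the free commutative monoid on the vertices of `E`, modulo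
the relations `a_v = ∑_{s(e) = v} a_{r(e)}` for each non-sink `v`. -/
abbrev GraphMonoid {V E : Type} (s r : E → V) : Type :=
  (addConGen (GMRel s r)).Quotient


/-! Elements of `M_E` are represented by multisets of vertices, and a vertex `v` may be
rewritten into the multiset of ranges of the edges leaving it. Rewritings of distinct vertices
commute, so the rewriting system is confluent: two multisets represent the same element exactly
when they rewrite to a common multiset. A rewriting of a sum splits into rewritings of the
summands, which reduces refinement in `M_E` to refinement of multisets.

In a refinement monoid, Riesz decomposition reduces separativity to cancelling one copy of `a`
in `a + a + x = a + a + y`. For `a`, `x`, `y` represented by `ρ`, `σ`, `τ`, take rewritings of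
`ρ + ρ + σ` and `ρ + ρ + τ` to a common multiset and a vertex `w` of `ρ`. If one of the four
copies of `w` is never rewritten, it appears on the other side and can be cancelled against a
copy there, so `w` leaves `ρ`. Otherwise all four copies are rewritten, and rewriting `w` in
`ρ` first shortens both rewritings. -/

section RefinementMonoid

variable (M : Type*) [AddCommMonoid M]

def IsRefinementMonoid : Prop :=
  ∀ a₁ a₂ b₁ b₂ : M, a₁ + a₂ = b₁ + b₂ →
    ∃ m₁₁ m₁₂ m₂₁ m₂₂ : M, a₁ = m₁₁ + m₁₂ ∧ a₂ = m₂₁ + m₂₂ ∧ b₁ = m₁₁ + m₂₁ ∧ b₂ = m₁₂ + m₂₂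

def IsSeparative : Prop :=
  ∀ a b c : M, a + c = b + c →
    (∃ n : ℕ, (∃ u : M, c + u = n • a) ∧ (∃ w : M, c + w = n • b)) → a = b

def CancelsDominated (n m : ℕ) : Prop :=
  ∀ a b c : M, a + c = b + c → (∃ u, c + u = n • a) → (∃ w, c + w = m • b) → a = b

variable {M}

theorem CancelsDominated.symm {n m : ℕ} (h : CancelsDominated M n m) : CancelsDominated M m n :=
  fun a b c hc ha hb => (h b a c hc.symm hb ha).symm

theorem cancelsDominated_zero_left (m : ℕ) : CancelsDominated M 0 m := by
  rintro a b c hc ⟨u, hu⟩ -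
  rw [zero_nsmul] at hu
  calc a = a + (c + u) := by rw [hu, add_zero]
    _ = b + (c + u) := by rw [← add_assoc, hc, add_assoc]
    _ = b := by rw [hu, add_zero]

theorem cancelsDominated_one_one (hcancel : ∀ a x y : M, a + a + x = a + a + y → a + x = a + y) :
    CancelsDominated M 1 1 := by
  rintro a b c hc ⟨u, hu⟩ ⟨w, hw⟩
  rw [one_nsmul] at hu hw
  rw [← hu, ← hw] at hc ⊢
  exact hcancel c u w (by simpa only [add_right_comm _ _ c] using hc)

namespace IsRefinementMonoid

/-- Riesz decomposition splits `c ≤ a + n • a` as `c₁ + c₂` with `c₁ ≤ a` and `c₂ ≤ n • a`;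
cancel `c₂` first, then `c₁`. -/
theorem cancelsDominated_succ (hM : IsRefinementMonoid M) {n m : ℕ}
    (h : CancelsDominated M n m) (h₁ : CancelsDominated M 1 m) :
    CancelsDominated M (n + 1) m := by
  rintro a b c hc ⟨u, hu⟩ ⟨w, hw⟩
  obtain ⟨c₁, c₂, u₁, u₂, rfl, rfl, ha, hna⟩ := hM c u a (n • a) (by rw [hu, succ_nsmul'])
  have hc₁ : a + c₁ = b + c₁ := by
    refine h _ _ c₂ (by simpa only [add_assoc] using hc) ⟨u₂ + n • c₁, ?_⟩
      ⟨c₁ + w + m • c₁, ?_⟩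
    · rw [nsmul_add, hna, add_assoc]
    · rw [nsmul_add, ← hw]; abel
  exact h₁ a b c₁ hc₁ ⟨u₁, by rw [one_nsmul, ha]⟩ ⟨c₂ + w, by rw [← hw, add_assoc]⟩

theorem cancelsDominated (hM : IsRefinementMonoid M)
    (hcancel : ∀ a x y : M, a + a + x = a + a + y → a + x = a + y) (n m : ℕ) :
    CancelsDominated M n m := by
  have hone : ∀ m, CancelsDominated M 1 m := by
    intro m
    induction m with
    | zero => exact (cancelsDominated_zero_left 1).symm
    | succ m ih =>
      exact (hM.cancelsDominated_succ ih.symm (cancelsDominated_one_one hcancel)).symm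
  induction n with
  | zero => exact cancelsDominated_zero_left m
  | succ n ih => exact hM.cancelsDominated_succ ih (hone m)

theorem isSeparative (hM : IsRefinementMonoid M)
    (hcancel : ∀ a x y : M, a + a + x = a + a + y → a + x = a + y) : IsSeparative M := by
  rintro a b c hc ⟨n, ha, hb⟩
  exact hM.cancelsDominated hcancel n n a b c hc ha hb

end IsRefinementMonoid

end RefinementMonoid

theorem Multiset.isRefinementMonoid {α : Type*} : IsRefinementMonoid (Multiset α) := by
  classical
  intro a₁ a₂ b₁ b₂ h
  refine ⟨a₁ ∩ b₁, a₁ - b₁, b₁ - a₁, a₂ - (b₁ - a₁), ?_, ?_, ?_, ?_⟩ <;>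
  · ext x
    have hx := congrArg (Multiset.count x) h
    simp only [Multiset.count_add, Multiset.count_sub, Multiset.count_inter] at hx ⊢
    omega

namespace GraphMonoid

open Relation

variable {V E : Type} {s : E → V} (r : E → V) (hrow : ∀ v : V, {e : E | s e = v}.Finite)

noncomputable def expansion (v : V) : Multiset V := (hrow v).toFinset.val.map r

def Step (x y : Multiset V) : Prop :=
  ∃ v z, expansion r hrow v ≠ 0 ∧ x = v ::ₘ z ∧ y = expansion r hrow v + z

inductive ReducesIn : ℕ → Multiset V → Multiset V → Prop
  | refl (x : Multiset V) : ReducesIn 0 x x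
  | head {n : ℕ} {x y z : Multiset V} : Step r hrow x y → ReducesIn n y z → ReducesIn (n + 1) x z

variable {r hrow} {w : V} {a b c k m n : ℕ} {x y z x₁ x₂ y₁ y₂ A B X Y : Multiset V}

theorem expansion_ne_zero_iff : expansion r hrow w ≠ 0 ↔ {e | s e = w}.Nonempty := by
  rw [← (hrow w).toFinset_nonempty, Finset.nonempty_iff_ne_empty, Ne, Ne, expansion,
    Multiset.map_eq_zero, Finset.val_eq_zero]

theorem Step.add_right (h : Step r hrow x y) (z : Multiset V) : Step r hrow (x + z) (y + z) := by
  obtain ⟨v, t, hv, rfl, rfl⟩ := h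
  exact ⟨v, t + z, hv, Multiset.cons_add _ _ _, add_assoc _ _ _⟩

theorem Step.of_add (h : Step r hrow (x₁ + x₂) y) :
    (∃ y₁, Step r hrow x₁ y₁ ∧ y = y₁ + x₂) ∨ (∃ y₂, Step r hrow x₂ y₂ ∧ y = x₁ + y₂) := by
  obtain ⟨v, t, hv, hx, rfl⟩ := h
  rcases Multiset.mem_add.1 (hx ▸ Multiset.mem_cons_self v t) with h₁ | h₂
  · obtain ⟨t₁, rfl⟩ := Multiset.exists_cons_of_mem h₁
    rw [Multiset.cons_add, Multiset.cons_inj_right] at hx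
    exact .inl ⟨_, ⟨v, t₁, hv, rfl, rfl⟩, by rw [← hx, add_assoc]⟩
  · obtain ⟨t₂, rfl⟩ := Multiset.exists_cons_of_mem h₂
    rw [Multiset.add_cons, Multiset.cons_inj_right] at hx
    exact .inr ⟨_, ⟨v, t₂, hv, rfl, rfl⟩, by rw [← hx]; abel⟩

theorem step_singleton_iff :
    Step r hrow {w} y ↔ expansion r hrow w ≠ 0 ∧ y = expansion r hrow w := by
  constructor
  · rintro ⟨v, t, hv, hx, rfl⟩
    obtain ⟨rfl, rfl⟩ := (Multiset.singleton_eq_cons_iff _).1 hx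
    exact ⟨hv, add_zero _⟩
  · rintro ⟨hw, rfl⟩
    exact ⟨w, 0, hw, rfl, (add_zero _).symm⟩

theorem Step.diamond (h₁ : Step r hrow x y₁) (h₂ : Step r hrow x y₂) :
    ∃ z, ReflGen (Step r hrow) y₁ z ∧ ReflTransGen (Step r hrow) y₂ z := by
  obtain ⟨v, t₁, hv, rfl, rfl⟩ := h₁
  obtain ⟨u, t₂, hu, hx, rfl⟩ := h₂
  rcases Multiset.cons_eq_cons.1 hx with ⟨rfl, rfl⟩ | ⟨-, t, rfl, rfl⟩
  · exact ⟨_, .refl, .refl⟩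
  · refine ⟨expansion r hrow v + expansion r hrow u + t,
      .single ⟨u, expansion r hrow v + t, hu, by rw [Multiset.add_cons], by abel⟩,
      .single ⟨v, expansion r hrow u + t, hv, by rw [Multiset.add_cons], by abel⟩⟩

theorem reducesIn_zero_iff : ReducesIn r hrow 0 x y ↔ x = y := by
  constructor
  · rintro ⟨⟩; rfl
  · rintro rfl; exact .refl x

theorem ReducesIn.trans (h₁ : ReducesIn r hrow m x y) (h₂ : ReducesIn r hrow n y z) :
    ReducesIn r hrow (m + n) x z := by
  induction h₁ with
  | refl => simpa using h₂
  | head hs _ ih => rw [Nat.add_right_comm]; exact .head hs (ih h₂)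

theorem ReducesIn.add_right (h : ReducesIn r hrow n x y) (z : Multiset V) :
    ReducesIn r hrow n (x + z) (y + z) := by
  induction h with
  | refl => exact .refl _
  | head hs _ ih => exact .head (hs.add_right z) ih

theorem ReducesIn.add (h₁ : ReducesIn r hrow m x₁ y₁) (h₂ : ReducesIn r hrow n x₂ y₂) :
    ReducesIn r hrow (m + n) (x₁ + x₂) (y₁ + y₂) := by
  have h₂' := h₂.add_right y₁
  rw [add_comm x₂, add_comm y₂] at h₂'
  exact (h₁.add_right x₂).trans h₂'

theorem ReducesIn.of_add (h : ReducesIn r hrow n (x₁ + x₂) y) :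
    ∃ n₁ n₂ y₁ y₂, n₁ + n₂ = n ∧ ReducesIn r hrow n₁ x₁ y₁ ∧ ReducesIn r hrow n₂ x₂ y₂ ∧
      y = y₁ + y₂ := by
  generalize hx : x₁ + x₂ = x at h
  induction h generalizing x₁ x₂ with
  | refl => exact ⟨0, 0, x₁, x₂, rfl, .refl _, .refl _, hx.symm⟩
  | head hs _ ih =>
    subst hx
    rcases hs.of_add with ⟨y₁, hs₁, rfl⟩ | ⟨y₂, hs₂, rfl⟩
    · obtain ⟨n₁, n₂, z₁, z₂, rfl, h₁, h₂, rfl⟩ := ih rfl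
      exact ⟨n₁ + 1, n₂, z₁, z₂, by omega, .head hs₁ h₁, h₂, rfl⟩
    · obtain ⟨n₁, n₂, z₁, z₂, rfl, h₁, h₂, rfl⟩ := ih rfl
      exact ⟨n₁, n₂ + 1, z₁, z₂, by omega, h₁, .head hs₂ h₂, rfl⟩

theorem ReducesIn.of_singleton_succ (h : ReducesIn r hrow (n + 1) {w} y) :
    expansion r hrow w ≠ 0 ∧ ReducesIn r hrow n (expansion r hrow w) y := by
  obtain _ | ⟨hs, h⟩ := h
  obtain ⟨hw, rfl⟩ := step_singleton_iff.1 hs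
  exact ⟨hw, h⟩

theorem ReducesIn.expansion_add (hA : ReducesIn r hrow (a + 1) {w} A)
    (hB : ReducesIn r hrow (b + 1) {w} B) (hX : ReducesIn r hrow c z X) :
    ReducesIn r hrow (a + b + c)
      (expansion r hrow w + (expansion r hrow w + z)) (A + (B + X)) := by
  rw [add_assoc]
  exact hA.of_singleton_succ.2.add (hB.of_singleton_succ.2.add hX)

theorem ReducesIn.singleton_add_of_eq_zero (hA : ReducesIn r hrow a {w} A)
    (hB : ReducesIn r hrow b {w} B) (hX : ReducesIn r hrow c z X) (h₀ : a = 0 ∨ b = 0) :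
    ∃ Y, ReducesIn r hrow (a + b + c) ({w} + z) Y ∧ A + (B + X) = {w} + Y := by
  rcases h₀ with rfl | rfl
  · obtain rfl := reducesIn_zero_iff.1 hA
    exact ⟨B + X, by simpa using hB.add hX, rfl⟩
  · obtain rfl := reducesIn_zero_iff.1 hB
    exact ⟨A + X, by simpa using hA.add hX, by abel⟩

theorem reflTransGen_step_iff :
    ReflTransGen (Step r hrow) x y ↔ ∃ n, ReducesIn r hrow n x y := by
  constructor
  · intro h
    induction h using ReflTransGen.head_induction_on with
    | refl => exact ⟨0, .refl _⟩
    | head hs _ ih => obtain ⟨n, h⟩ := ih; exact ⟨n + 1, .head hs h⟩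
  · rintro ⟨n, h⟩
    induction h with
    | refl => exact .refl
    | head hs _ ih => exact .head hs ih

theorem reflTransGen_step_add (h₁ : ReflTransGen (Step r hrow) x₁ y₁)
    (h₂ : ReflTransGen (Step r hrow) x₂ y₂) : ReflTransGen (Step r hrow) (x₁ + x₂) (y₁ + y₂) := by
  obtain ⟨m, h₁⟩ := reflTransGen_step_iff.1 h₁
  obtain ⟨n, h₂⟩ := reflTransGen_step_iff.1 h₂
  exact reflTransGen_step_iff.2 ⟨m + n, h₁.add h₂⟩

variable (r hrow) in
def joinCon : AddCon (Multiset V) where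
  r := Join (ReflTransGen (Step r hrow))
  iseqv := equivalence_join_reflTransGen fun _ _ _ => Step.diamond
  add' := fun ⟨_, h₁, h₂⟩ ⟨_, h₃, h₄⟩ =>
    ⟨_, reflTransGen_step_add h₁ h₃, reflTransGen_step_add h₂ h₄⟩

section Quotient

variable [DecidableEq V]

variable (s r) in
noncomputable def mk : Multiset V →+ GraphMonoid s r :=
  (addConGen (GMRel s r)).mk'.comp Multiset.toFinsupp.toAddMonoidHom

theorem mk_surjective : Function.Surjective (mk s r) :=
  AddCon.mk'_surjective.comp Multiset.toFinsupp.surjective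

theorem toFinsupp_expansion (v : V) :
    Multiset.toFinsupp (expansion r hrow v) =
      (hrow v).toFinset.sum fun e => Finsupp.single (r e) 1 := by
  rw [Multiset.toFinsupp_eq_iff, Finsupp.toMultiset_sum]
  simp only [Finsupp.toMultiset_single, one_nsmul]
  rw [Finset.sum_eq_multiset_sum, ← Function.comp_def, ← Multiset.map_map,
    Multiset.sum_map_singleton, expansion]

theorem mk_singleton (hw : expansion r hrow w ≠ 0) :
    mk s r {w} = mk s r (expansion r hrow w) := by
  change ((Multiset.toFinsupp {w} : V →₀ ℕ) : GraphMonoid s r) =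
    (Multiset.toFinsupp (expansion r hrow w) : GraphMonoid s r)
  rw [Multiset.toFinsupp_singleton, toFinsupp_expansion]
  exact (AddCon.eq _).2 (.of _ _ (.ck w (hrow w) (expansion_ne_zero_iff.1 hw)))

theorem Step.mk_eq (h : Step r hrow x y) : mk s r x = mk s r y := by
  obtain ⟨v, z, hv, rfl, rfl⟩ := h
  rw [← Multiset.singleton_add, map_add, map_add, mk_singleton hv]

theorem mk_eq_of_reflTransGen (h : ReflTransGen (Step r hrow) x y) : mk s r x = mk s r y := by
  induction h with
  | refl => rfl
  | tail _ hs ih => exact ih.trans hs.mk_eq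

theorem ReducesIn.mk_eq (h : ReducesIn r hrow n x y) : mk s r x = mk s r y :=
  mk_eq_of_reflTransGen (reflTransGen_step_iff.2 ⟨n, h⟩)

theorem mk_eq_mk_iff : mk s r x = mk s r y ↔ Join (ReflTransGen (Step r hrow)) x y := by
  refine ⟨fun h => ?_, fun ⟨z, hx, hy⟩ => (mk_eq_of_reflTransGen hx).trans
    (mk_eq_of_reflTransGen hy).symm⟩
  have hle : addConGen (GMRel s r) ≤
      (joinCon r hrow).comap Multiset.toFinsupp.symm (map_add _) := by
    rw [AddCon.addConGen_le]
    rintro _ _ ⟨v, hv, hne⟩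
    have hexp : Multiset.toFinsupp.symm (hv.toFinset.sum fun e => Finsupp.single (r e) 1) =
        expansion r hrow v := by
      rw [AddEquiv.symm_apply_eq, toFinsupp_expansion]
    rw [AddCon.comap_rel, hexp, ← Multiset.toFinsupp_singleton, AddEquiv.symm_apply_apply]
    exact ⟨_, .single (step_singleton_iff.2 ⟨expansion_ne_zero_iff.2 hne, rfl⟩), .refl⟩
  have hxy := hle ((AddCon.eq _).1 h)
  simp only [AddCon.comap_rel, AddEquiv.coe_toAddMonoidHom, AddEquiv.symm_apply_apply] at hxy
  exact hxy

theorem ReducesIn.exists_absorb {y θ : Multiset V} (hA : ReducesIn r hrow a {w} A)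
    (hX : ReducesIn r hrow k y X) (h : A + X = {w} + θ) :
    ∃ Δ m, m ≤ a + k ∧ mk s r ({w} + Δ) = mk s r {w} ∧ ReducesIn r hrow m (y + Δ) θ := by
  have hw : w ∈ A + X := by
    rw [h]; exact Multiset.mem_add.2 (.inl (Multiset.mem_singleton_self w))
  rcases Multiset.mem_add.1 hw with hwA | hwX
  · obtain ⟨A₀, rfl⟩ := Multiset.exists_cons_of_mem hwA
    rw [← Multiset.singleton_add, add_assoc, add_right_inj] at h
    refine ⟨A₀, k, by omega, ?_, ?_⟩
    · rw [Multiset.singleton_add]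
      exact hA.mk_eq.symm
    · rw [← h, add_comm A₀]
      exact hX.add_right A₀
  · obtain ⟨X₀, rfl⟩ := Multiset.exists_cons_of_mem hwX
    rw [← Multiset.singleton_add, add_left_comm, add_right_inj] at h
    refine ⟨0, k + a, by omega, by rw [add_zero], ?_⟩
    rw [add_zero, ← h]
    exact hX.trans (Multiset.singleton_add w X₀ ▸ hA.add_right X₀)

/-- A copy of `w` that the right-hand rewriting leaves alone is matched by a copy of `w`
on the left, so `w` can be removed from `ρ`. -/
theorem mk_add_eq_of_reducesIn_of_unrewritten {ρ σ τ : Multiset V}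
    (ih : ∀ σ τ γ : Multiset V, ∀ n₁ n₂, n₁ + n₂ ≤ n → ReducesIn r hrow n₁ (ρ + ρ + σ) γ →
      ReducesIn r hrow n₂ (ρ + ρ + τ) γ → mk s r (ρ + σ) = mk s r (ρ + τ))
    (hA : ReducesIn r hrow a {w} A) (hX : ReducesIn r hrow k ({w} + (ρ + ρ + σ)) X)
    (hY : ReducesIn r hrow m ({w} + (ρ + ρ + τ)) Y) (hAX : A + X = {w} + Y)
    (hn : a + k + m ≤ n) :
    mk s r ({w} + ρ + σ) = mk s r ({w} + ρ + τ) := by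
  obtain ⟨Δ, m', hm', hΔ, hXΔ⟩ := hA.exists_absorb hX hAX
  have key := ih ({w} + σ + Δ) ({w} + τ) Y m' m (by omega)
    (by convert hXΔ using 1; abel) (by convert hY using 1; abel)
  calc mk s r ({w} + ρ + σ) = mk s r ({w} + Δ) + mk s r ρ + mk s r σ := by
        rw [hΔ, map_add, map_add]
    _ = mk s r (ρ + ({w} + σ + Δ)) := by simp only [map_add]; abel
    _ = mk s r (ρ + ({w} + τ)) := key
    _ = mk s r ({w} + ρ + τ) := by rw [add_left_comm, add_assoc]

theorem mk_add_eq_of_reducesIn (n : ℕ) :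
    ∀ ρ σ τ γ : Multiset V, ∀ n₁ n₂, n₁ + n₂ ≤ n → ReducesIn r hrow n₁ (ρ + ρ + σ) γ →
      ReducesIn r hrow n₂ (ρ + ρ + τ) γ → mk s r (ρ + σ) = mk s r (ρ + τ) := by
  induction n using Nat.strong_induction_on with
  | _ n ihn =>
  intro ρ
  induction ρ using Multiset.induction_on with
  | empty =>
    intro σ τ γ n₁ n₂ _ h₁ h₂
    simp only [add_zero, zero_add] at h₁ h₂ ⊢
    exact mk_eq_mk_iff.2 ⟨γ, reflTransGen_step_iff.2 ⟨n₁, h₁⟩, reflTransGen_step_iff.2 ⟨n₂, h₂⟩⟩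
  | cons w ρ ihρ =>
  intro σ τ γ n₁ n₂ hn h₁ h₂
  have hsplit : ∀ σ, w ::ₘ ρ + w ::ₘ ρ + σ = {w} + ({w} + (ρ + ρ + σ)) := by
    intro σ; simp only [← Multiset.singleton_add]; abel
  rw [hsplit] at h₁ h₂
  rw [← Multiset.singleton_add]
  obtain ⟨a₁, k₁, A₁, X₁, rfl, hA₁, hX₁, rfl⟩ := h₁.of_add
  obtain ⟨a₂, k₂, A₂, X₂, rfl, hA₂, hX₂, hγ⟩ := h₂.of_add
  obtain ⟨b₁, c₁, B₁, Y₁, rfl, hB₁, hY₁, rfl⟩ := hX₁.of_add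
  obtain ⟨b₂, c₂, B₂, Y₂, rfl, hB₂, hY₂, rfl⟩ := hX₂.of_add
  by_cases hleft : a₁ = 0 ∨ b₁ = 0
  · obtain ⟨Z, hZ, hγZ⟩ := hA₁.singleton_add_of_eq_zero hB₁ hY₁ hleft
    exact (mk_add_eq_of_reducesIn_of_unrewritten ihρ hA₂ hX₂ hZ (hγ.symm.trans hγZ)
      (by omega)).symm
  by_cases hright : a₂ = 0 ∨ b₂ = 0
  · obtain ⟨Z, hZ, hγZ⟩ := hA₂.singleton_add_of_eq_zero hB₂ hY₂ hright
    exact mk_add_eq_of_reducesIn_of_unrewritten ihρ hA₁ hX₁ hZ (hγ.trans hγZ) (by omega)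
  obtain ⟨a₁, rfl⟩ := Nat.exists_eq_add_one_of_ne_zero (by omega : a₁ ≠ 0)
  obtain ⟨b₁, rfl⟩ := Nat.exists_eq_add_one_of_ne_zero (by omega : b₁ ≠ 0)
  obtain ⟨a₂, rfl⟩ := Nat.exists_eq_add_one_of_ne_zero (by omega : a₂ ≠ 0)
  obtain ⟨b₂, rfl⟩ := Nat.exists_eq_add_one_of_ne_zero (by omega : b₂ ≠ 0)
  have hexp : ∀ σ, expansion r hrow w + ρ + (expansion r hrow w + ρ) + σ =
      expansion r hrow w + (expansion r hrow w + (ρ + ρ + σ)) := by intro σ; abel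
  have key := ihn _ (by omega) (expansion r hrow w + ρ) σ τ _ _ _ le_rfl
    ((hexp σ).symm ▸ hA₁.expansion_add hB₁ hY₁)
    ((hexp τ).symm ▸ hγ ▸ hA₂.expansion_add hB₂ hY₂)
  simpa only [map_add, mk_singleton hA₁.of_singleton_succ.1] using key

end Quotient

theorem isRefinementMonoid (hrow : ∀ v : V, {e : E | s e = v}.Finite) :
    IsRefinementMonoid (GraphMonoid s r) := by
  classical
  intro a₁ a₂ b₁ b₂ h
  obtain ⟨x₁, rfl⟩ := mk_surjective a₁
  obtain ⟨x₂, rfl⟩ := mk_surjective a₂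
  obtain ⟨y₁, rfl⟩ := mk_surjective b₁
  obtain ⟨y₂, rfl⟩ := mk_surjective b₂
  rw [← map_add, ← map_add, mk_eq_mk_iff (hrow := hrow)] at h
  obtain ⟨γ, hx, hy⟩ := h
  obtain ⟨_, hx⟩ := reflTransGen_step_iff.1 hx
  obtain ⟨_, hy⟩ := reflTransGen_step_iff.1 hy
  obtain ⟨_, _, x₁', x₂', -, hx₁, hx₂, rfl⟩ := hx.of_add
  obtain ⟨_, _, y₁', y₂', -, hy₁, hy₂, hγ⟩ := hy.of_add
  obtain ⟨m₁₁, m₁₂, m₂₁, m₂₂, h₁, h₂, h₃, h₄⟩ := Multiset.isRefinementMonoid x₁' x₂' y₁' y₂' hγ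
  exact ⟨mk s r m₁₁, mk s r m₁₂, mk s r m₂₁, mk s r m₂₂,
    by rw [hx₁.mk_eq, h₁, map_add], by rw [hx₂.mk_eq, h₂, map_add],
    by rw [hy₁.mk_eq, h₃, map_add], by rw [hy₂.mk_eq, h₄, map_add]⟩

theorem add_add_cancel (hrow : ∀ v : V, {e : E | s e = v}.Finite) (a x y : GraphMonoid s r)
    (h : a + a + x = a + a + y) : a + x = a + y := by
  classical
  obtain ⟨ρ, rfl⟩ := mk_surjective a
  obtain ⟨σ, rfl⟩ := mk_surjective x
  obtain ⟨τ, rfl⟩ := mk_surjective y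
  simp only [← map_add] at h ⊢
  obtain ⟨γ, h₁, h₂⟩ := (mk_eq_mk_iff (hrow := hrow)).1 h
  obtain ⟨n₁, h₁⟩ := reflTransGen_step_iff.1 h₁
  obtain ⟨n₂, h₂⟩ := reflTransGen_step_iff.1 h₂
  exact mk_add_eq_of_reducesIn _ ρ σ τ γ n₁ n₂ le_rfl h₁ h₂

end GraphMonoid

/-- For a row-finite graph `E`, the graph monoid `M_E` is a refinement monoid and is
separative. -/
theorem graph_monoid_refinement_and_separative (V E : Type) (s r : E → V)
    (hrow : ∀ v : V, {e : E | s e = v}.Finite) :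
    (∀ a₁ a₂ b₁ b₂ : GraphMonoid s r, a₁ + a₂ = b₁ + b₂ →
        ∃ m₁₁ m₁₂ m₂₁ m₂₂ : GraphMonoid s r,
          a₁ = m₁₁ + m₁₂ ∧ a₂ = m₂₁ + m₂₂ ∧ b₁ = m₁₁ + m₂₁ ∧ b₂ = m₁₂ + m₂₂) ∧
      (∀ a b c : GraphMonoid s r, a + c = b + c →
        (∃ n : ℕ, (∃ u : GraphMonoid s r, c + u = n • a) ∧
          (∃ w : GraphMonoid s r, c + w = n • b)) → a = b) :=
  ⟨GraphMonoid.isRefinementMonoid hrow,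
    (GraphMonoid.isRefinementMonoid hrow).isSeparative (GraphMonoid.add_add_cancel hrow)⟩
end
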